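/- Let m ≥ 1 and let f : ℝᵐ → ℝ be a C¹ (continuously differentiable) convex function. Suppose x̂ ∈ ℝᵐ is a critical point of f (∇f(x̂) = 0) and that f is strictly convex on some open ball centered at x̂. Then x̂ is the unique critical point of f in ℝᵐ, x̂ is the unique global minimizer of f, and f(x) → +∞ as ‖x‖ → ∞. -/

import Mathlib

/-!
A critical point of a differentiable convex function is a global minimum, seen on each line through
it. Strict convexity near the minimizer `a` makes `f a < f y` for `y ≠ a` close to `a`, and
convexity along the segment from `a` to any `x ≠ a` propagates this to `f a < f x`; in particular
every other critical point, being a minimizer too, must be `a`. Finally, `f - f a` has a positive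
minimum `c` on the unit sphere around `a` (compactness), and convexity along rays turns this into
the linear growth `f x ≥ f a + c ‖x - a‖` outside the unit ball.
-/

open Set Filter Metric Bornology AffineMap Topology

section Convexity

variable {E : Type*} [AddCommGroup E] [Module ℝ E] {f : E → ℝ} {a x : E}

lemma ConvexOn.apply_lineMap_sub_le (hf : ConvexOn ℝ univ f) {t : ℝ} (ht₀ : 0 ≤ t)
    (ht₁ : t ≤ 1) : f (lineMap a x t) - f a ≤ t * (f x - f a) := by
  have h := hf.2 (mem_univ a) (mem_univ x) (sub_nonneg.2 ht₁) ht₀ (sub_add_cancel 1 t)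
  rw [smul_eq_mul, smul_eq_mul] at h
  rw [lineMap_apply_module]
  linarith

lemma StrictConvexOn.lt_of_isMinOn {s : Set E} (hf : StrictConvexOn ℝ s f) (hmin : IsMinOn f s a)
    (ha : a ∈ s) (hx : x ∈ s) (hxa : x ≠ a) : f a < f x := by
  have hmid := hf.lt_on_open_segment' ha hx hxa.symm one_half_pos one_half_pos (add_halves 1)
  have hle : f a ≤ f ((1 / 2 : ℝ) • a + (1 / 2 : ℝ) • x) :=
    hmin (hf.1 ha hx one_half_pos.le one_half_pos.le (add_halves 1))
  by_contra! hxle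
  exact (hle.trans_lt hmid).not_ge (max_le le_rfl hxle)

end Convexity

lemma exists_pos_add_le_on_sphere {X : Type*} [PseudoMetricSpace X] [ProperSpace X]
    {f : X → ℝ} {a : X} (hf : Continuous f) (hmin : ∀ x ≠ a, f a < f x)
    {ρ : ℝ} (hρ : ρ ≠ 0) :
    ∃ c > 0, ∀ y ∈ sphere a ρ, f a + c ≤ f y := by
  rcases (sphere a ρ).eq_empty_or_nonempty with hempty | hne
  · exact ⟨1, one_pos, by simp [hempty]⟩
  obtain ⟨y₀, hy₀, hy₀min⟩ := (isCompact_sphere a ρ).exists_isMinOn hne hf.continuousOn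
  refine ⟨f y₀ - f a, sub_pos.2 (hmin y₀ (ne_of_mem_sphere hy₀ hρ)), fun y hy => ?_⟩
  linarith [show f y₀ ≤ f y from hy₀min hy]

section Normed

variable {E : Type*} [NormedAddCommGroup E] [NormedSpace ℝ E] {f : E → ℝ} {a x : E}

lemma ConvexOn.isMinOn_of_fderiv_eq_zero (hf : ConvexOn ℝ univ f) (hd : DifferentiableAt ℝ f a)
    (hcrit : fderiv ℝ f a = 0) : IsMinOn f univ a := by
  intro x _
  have hline : ConvexOn ℝ univ (f ∘ lineMap (k := ℝ) a x) := by
    simpa using hf.comp_affineMap (lineMap a x)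
  have hderiv : HasDerivAt (f ∘ lineMap (k := ℝ) a x) 0 0 := by
    have hfa : HasFDerivAt f (fderiv ℝ f a) (lineMap a x (0 : ℝ)) := by
      rw [lineMap_apply_zero]
      exact hd.hasFDerivAt
    simpa [hcrit] using hfa.comp_hasDerivAt (0 : ℝ) hasDerivAt_lineMap
  have hslope := hline.le_slope_of_hasDerivAt (mem_univ 0) (mem_univ 1) one_pos hderiv
  simpa [slope_def_field] using hslope

lemma ConvexOn.lt_of_isMinOn_of_strictConvexOn_nhds (hf : ConvexOn ℝ univ f)
    (hmin : IsMinOn f univ a) {s : Set E} (hs : s ∈ 𝓝 a) (hstrict : StrictConvexOn ℝ s f)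
    (hxa : x ≠ a) : f a < f x := by
  have hnear : ∀ᶠ t in 𝓝[>] (0 : ℝ), lineMap a x t ∈ s ∧ t < 1 := by
    refine (Filter.Eventually.and ?_ (eventually_lt_nhds one_pos)).filter_mono nhdsWithin_le_nhds
    have hcont : Continuous (lineMap a x : ℝ → E) := lineMap_continuous
    exact hcont.continuousAt.preimage_mem_nhds (by rwa [lineMap_apply_zero])
  obtain ⟨t, ⟨hts, ht₁⟩, ht₀⟩ := (hnear.and self_mem_nhdsWithin).exists
  have hyne : lineMap a x t ≠ a := by
    rw [Ne, lineMap_eq_left_iff, not_or]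
    exact ⟨hxa.symm, ht₀.ne'⟩
  have hlt := hstrict.lt_of_isMinOn (hmin.on_subset (subset_univ s)) (mem_of_mem_nhds hs) hts hyne
  have hle := hf.apply_lineMap_sub_le (a := a) (x := x) ht₀.le ht₁.le
  exact sub_pos.1 (pos_of_mul_pos_right (by linarith) ht₀.le)

lemma ConvexOn.add_div_mul_dist_le (hf : ConvexOn ℝ univ f) {ρ c : ℝ} (hρ : 0 < ρ)
    (hc : ∀ y ∈ sphere a ρ, f a + c ≤ f y) (hx : ρ ≤ dist x a) :
    f a + c / ρ * dist x a ≤ f x := by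
  have hd : 0 < dist x a := hρ.trans_le hx
  set t := ρ / dist x a with ht
  have ht₀ : 0 < t := div_pos hρ hd
  have hy : lineMap a x t ∈ sphere a ρ := by
    rw [mem_sphere, dist_lineMap_left, Real.norm_of_nonneg ht₀.le, dist_comm, ht,
      div_mul_cancel₀ _ hd.ne']
  have hct : c ≤ t * (f x - f a) := by
    linarith [hc _ hy, hf.apply_lineMap_sub_le (a := a) (x := x) ht₀.le ((div_le_one hd).2 hx)]
  rw [ht, div_mul_eq_mul_div, le_div_iff₀ hd] at hct
  have hgrowth : c * dist x a / ρ ≤ f x - f a := by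
    rw [div_le_iff₀ hρ]
    linarith
  rw [div_mul_eq_mul_div]
  linarith

theorem ConvexOn.tendsto_cobounded_atTop [ProperSpace E] (hf : ConvexOn ℝ univ f)
    (hcont : Continuous f) (hmin : ∀ x ≠ a, f a < f x) : Tendsto f (cobounded E) atTop := by
  obtain ⟨c, hc, hsphere⟩ := exists_pos_add_le_on_sphere hcont hmin one_ne_zero
  have hdist := tendsto_dist_right_cobounded_atTop a
  refine tendsto_atTop_mono' _ ?_
    (tendsto_atTop_add_const_left _ (f a) (hdist.const_mul_atTop (div_pos hc one_pos)))
  filter_upwards [hdist.eventually_ge_atTop 1] with x hx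
  exact hf.add_div_mul_dist_le one_pos hsphere hx

end Normed

theorem convex_critical_point_unique_min_and_proper (m : ℕ)
    (f : (Fin m → ℝ) → ℝ) (hf : ContDiff ℝ 1 f)
    (hconv : ConvexOn ℝ Set.univ f)
    (xhat : Fin m → ℝ) (hcrit : fderiv ℝ f xhat = 0)
    (r : ℝ) (hr : 0 < r) (hstrict : StrictConvexOn ℝ (Metric.ball xhat r) f) :
    (∀ x : Fin m → ℝ, fderiv ℝ f x = 0 → x = xhat) ∧
      (∀ x : Fin m → ℝ, f xhat ≤ f x ∧ (f x = f xhat → x = xhat)) ∧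
      Tendsto f (Filter.comap norm Filter.atTop) Filter.atTop := by
  have hdiff : Differentiable ℝ f := hf.differentiable one_ne_zero
  have hmin : IsMinOn f univ xhat := hconv.isMinOn_of_fderiv_eq_zero (hdiff xhat) hcrit
  have hstrictMin : ∀ x ≠ xhat, f xhat < f x := fun x hx =>
    hconv.lt_of_isMinOn_of_strictConvexOn_nhds hmin (ball_mem_nhds xhat hr) hstrict hx
  refine ⟨fun x hx => ?_, fun x => ⟨hmin (mem_univ x), fun hx => ?_⟩, ?_⟩
  · by_contra hne
    exact (hstrictMin x hne).not_ge
      (hconv.isMinOn_of_fderiv_eq_zero (hdiff x) hx (mem_univ xhat))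
  · by_contra hne
    exact (hstrictMin x hne).ne' hx
  · rw [comap_norm_atTop]
    exact hconv.tendsto_cobounded_atTop hdiff.continuous hstrictMin
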